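/- For every m ∈ ℕ, the ℝ-vector space H_m of weighted homogeneous Δ_H-harmonic polynomials of degree m on the first Heisenberg group is finite-dimensional of dimension m + 1. -/

import Mathlib

/-!
The sub-Laplacian lowers the weight by two, and `Δ_H : P_{m+2} → P_m` is onto: on monomials,
`Δ_H (x^(a+2) y^b t^c) = (a+2)(a+1) x^a y^b t^c + (monomials of the same weight with smaller
b + 2c)`, so every monomial of `P_m` is reached by induction on `b + 2c`. By rank–nullity
`dim H_m = dim P_m - dim P_{m-2}`, and the exponents of weight `m` are those of `x^k y^(m-k)`
(`k ≤ m`) together with `t` times those of weight `m - 2`.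
-/

open MvPolynomial

noncomputable section

/-- The polynomial ring ℝ[x,y,t], with x = X 0, y = X 1, t = X 2. -/
abbrev R3 := MvPolynomial (Fin 3) ℝ

/-- The weights w(x) = w(y) = 1, w(t) = 2. -/
def w3 : Fin 3 → ℤ := ![1, 1, 2]

/-- The horizontal vector field X p = ∂ₓ p + 2 y ∂ₜ p. -/
def Xop : R3 →ₗ[ℝ] R3 :=
  (pderiv (0 : Fin 3)).toLinearMap +
    (LinearMap.mulLeft ℝ ((2 : R3) * X 1)) ∘ₗ (pderiv (2 : Fin 3)).toLinearMap

/-- The horizontal vector field Y p = ∂_y p − 2 x ∂ₜ p. -/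
def Yop : R3 →ₗ[ℝ] R3 :=
  (pderiv (1 : Fin 3)).toLinearMap -
    (LinearMap.mulLeft ℝ ((2 : R3) * X 0)) ∘ₗ (pderiv (2 : Fin 3)).toLinearMap

/-- The Heisenberg sub-Laplacian Δ_H = X² + Y². -/
def ΔH : R3 →ₗ[ℝ] R3 := Xop ∘ₗ Xop + Yop ∘ₗ Yop

/-- P_m : weighted homogeneous polynomials of degree m (ℤ-indexed, so P_m = 0 for m < 0). -/
def Pm (m : ℤ) : Submodule ℝ R3 := weightedHomogeneousSubmodule ℝ w3 m

/-- H_m : weighted homogeneous Δ_H-harmonic polynomials of degree m. -/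
def Hm (m : ℤ) : Submodule ℝ R3 := Pm m ⊓ LinearMap.ker ΔH

/-- The polynomial gauge η₊² = x² + y² + 4t. -/
def etaSq : R3 := X 0 ^ 2 + X 1 ^ 2 + 4 * X 2

theorem Submodule.finrank_inf_ker_add_finrank_map {K V W : Type*} [DivisionRing K]
    [AddCommGroup V] [Module K V] [AddCommGroup W] [Module K W] (f : V →ₗ[K] W)
    (P : Submodule K V) [FiniteDimensional K P] :
    Module.finrank K ↥(P ⊓ LinearMap.ker f) + Module.finrank K ↥(P.map f) =
      Module.finrank K P := by
  have h := (f.domRestrict P).finrank_range_add_finrank_ker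
  rw [LinearMap.range_domRestrict, LinearMap.ker_domRestrict] at h
  rw [← h, add_comm]
  congr 1
  have hcomap : (LinearMap.ker f).comap P.subtype = (P ⊓ LinearMap.ker f).comap P.subtype := by
    ext x; simp
  rw [hcomap]
  exact ((Submodule.comapSubtypeEquivOfLe inf_le_left).finrank_eq).symm

theorem Submodule.span_image_le_of_forall_mem_sup_span {R M ι : Type*} [Semiring R]
    [AddCommMonoid M] [Module R M] {r : ι → ι → Prop} (hr : WellFounded r) {s : Set ι}
    {v : ι → M} {V : Submodule R M}
    (h : ∀ i ∈ s, v i ∈ V ⊔ span R (v '' {j | j ∈ s ∧ r j i})) :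
    span R (v '' s) ≤ V := by
  refine span_le.2 (Set.image_subset_iff.2 fun i hi ↦ ?_)
  induction i using hr.induction with
  | _ i ih =>
    have hlow : span R (v '' {j | j ∈ s ∧ r j i}) ≤ V :=
      span_le.2 (Set.image_subset_iff.2 fun j hj ↦ ih j hj.2 hj.1)
    exact sup_le le_rfl hlow (h i hi)

namespace MvPolynomial

variable {σ R : Type*} [CommRing R]

open scoped Classical in
/-- The monomial `X^v` for an integer exponent vector `v`, taken to be `0` as soon as some
exponent is negative: with this convention the rules for `pderiv` and for multiplication by `X i`
need no side conditions on the exponents. -/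
def intMonomial (v : σ →₀ ℤ) : MvPolynomial σ R :=
  if 0 ≤ v then monomial (v.mapRange Int.toNat rfl) 1 else 0

lemma intMonomial_of_nonneg {v : σ →₀ ℤ} (hv : 0 ≤ v) :
    (intMonomial v : MvPolynomial σ R) = monomial (v.mapRange Int.toNat rfl) 1 := by
  simp [intMonomial, hv]

lemma intMonomial_of_not_nonneg {v : σ →₀ ℤ} (hv : ¬0 ≤ v) :
    (intMonomial v : MvPolynomial σ R) = 0 := by
  simp [intMonomial, hv]

lemma pderiv_intMonomial (i : σ) (v : σ →₀ ℤ) :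
    pderiv i (intMonomial v : MvPolynomial σ R) =
      (v i : R) • intMonomial (v - Finsupp.single i 1) := by
  classical
  by_cases hv : 0 ≤ v
  · by_cases hvi : v i = 0
    · simp [intMonomial_of_nonneg hv, hvi]
    have hv' : 0 ≤ v - Finsupp.single i 1 := Finsupp.le_def.2 fun j ↦ by
      rcases eq_or_ne j i with rfl | hj
      · have := Finsupp.le_def.1 hv j
        simp only [Finsupp.coe_zero, Pi.zero_apply, Finsupp.coe_sub, Pi.sub_apply,
          Finsupp.single_eq_same] at this ⊢
        omega
      · simpa [hj] using Finsupp.le_def.1 hv j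
    have hexp : (v - Finsupp.single i 1).mapRange Int.toNat rfl =
        v.mapRange Int.toNat rfl - Finsupp.single i 1 := Finsupp.ext fun j ↦ by
      rcases eq_or_ne j i with rfl | hj <;> simp [*]
    rw [intMonomial_of_nonneg hv, intMonomial_of_nonneg hv', pderiv_monomial, smul_monomial,
      hexp, one_mul, smul_eq_mul, mul_one, ← Int.cast_natCast, Finsupp.mapRange_apply,
      Int.toNat_of_nonneg (Finsupp.le_def.1 hv i)]
  · have hv' : ¬0 ≤ v - Finsupp.single i 1 := fun h ↦ hv (h.trans (sub_le_self _ (by simp)))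
    simp [intMonomial_of_not_nonneg hv, intMonomial_of_not_nonneg hv']

lemma X_mul_intMonomial {i : σ} {v : σ →₀ ℤ} (hvi : 0 ≤ v i) :
    X i * (intMonomial v : MvPolynomial σ R) = intMonomial (v + Finsupp.single i 1) := by
  classical
  by_cases hv : 0 ≤ v
  · have hv' : 0 ≤ v + Finsupp.single i 1 := add_nonneg hv (by simp)
    have hexp : (v + Finsupp.single i 1).mapRange Int.toNat rfl =
        Finsupp.single i 1 + v.mapRange Int.toNat rfl := Finsupp.ext fun j ↦ by
      rcases eq_or_ne j i with rfl | hj <;> simp [*]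
      omega
    rw [intMonomial_of_nonneg hv, intMonomial_of_nonneg hv', X, monomial_mul, one_mul, hexp]
  · have hv' : ¬0 ≤ v + Finsupp.single i 1 := fun h ↦ hv <| Finsupp.le_def.2 fun j ↦ by
      rcases eq_or_ne j i with rfl | hj
      · exact hvi
      · simpa [hj] using Finsupp.le_def.1 h j
    simp [intMonomial_of_not_nonneg hv, intMonomial_of_not_nonneg hv']

end MvPolynomial

lemma Xop_apply (p : R3) : Xop p = pderiv 0 p + 2 * X 1 * pderiv 2 p := by
  simp [Xop, mul_assoc]

lemma Yop_apply (p : R3) : Yop p = pderiv 1 p - 2 * X 0 * pderiv 2 p := by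
  simp [Yop, mul_assoc]

lemma isWeightedHomogeneous_two_mul_X (i : Fin 3) :
    ((2 : R3) * X i).IsWeightedHomogeneous w3 (w3 i) := by
  simpa [← map_ofNat C 2] using (isWeightedHomogeneous_X ℝ w3 i).C_mul 2

lemma Xop_mem_Pm {k : ℤ} {p : R3} (hp : p ∈ Pm k) : Xop p ∈ Pm (k - 1) := by
  rw [Pm, mem_weightedHomogeneousSubmodule] at hp ⊢
  have h0 : (pderiv 0 p).IsWeightedHomogeneous w3 (k - 1) := hp.pderiv (by simp [w3])
  have h2 : (pderiv 2 p).IsWeightedHomogeneous w3 (k - 2) := hp.pderiv (by simp [w3])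
  rw [Xop_apply]
  have h2' := (isWeightedHomogeneous_two_mul_X 1).mul h2
  rw [show w3 1 + (k - 2) = k - 1 by simp [w3]; ring] at h2'
  exact h0.add h2'

lemma Yop_mem_Pm {k : ℤ} {p : R3} (hp : p ∈ Pm k) : Yop p ∈ Pm (k - 1) := by
  rw [Pm, mem_weightedHomogeneousSubmodule] at hp ⊢
  have h1 : (pderiv 1 p).IsWeightedHomogeneous w3 (k - 1) := hp.pderiv (by simp [w3])
  have h2 : (pderiv 2 p).IsWeightedHomogeneous w3 (k - 2) := hp.pderiv (by simp [w3])
  rw [Yop_apply]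
  have h2' := (isWeightedHomogeneous_two_mul_X 0).mul h2
  rw [show w3 0 + (k - 2) = k - 1 by simp [w3]; ring] at h2'
  exact h1.sub h2'

lemma ΔH_apply (p : R3) : ΔH p = Xop (Xop p) + Yop (Yop p) := rfl

lemma ΔH_mem_Pm {k : ℤ} {p : R3} (hp : p ∈ Pm k) : ΔH p ∈ Pm (k - 2) := by
  rw [ΔH_apply, show k - 2 = k - 1 - 1 by ring]
  exact add_mem (Xop_mem_Pm (Xop_mem_Pm hp)) (Yop_mem_Pm (Yop_mem_Pm hp))

def expsOfWeight (n : ℤ) : Set (Fin 3 →₀ ℕ) := {d | Finsupp.weight w3 d = n}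

lemma weight_w3 (d : Fin 3 →₀ ℕ) : Finsupp.weight w3 d = d 0 + d 1 + 2 * d 2 := by
  simp [Finsupp.weight_apply, Finsupp.sum_fintype, Fin.sum_univ_three, w3]
  ring

lemma mem_expsOfWeight {d : Fin 3 →₀ ℕ} {n : ℤ} :
    d ∈ expsOfWeight n ↔ (d 0 : ℤ) + d 1 + 2 * d 2 = n := by
  rw [expsOfWeight, Set.mem_ofPred_eq, weight_w3]

lemma expsOfWeight_finite (n : ℤ) : (expsOfWeight n).Finite := by
  refine (Set.finite_Iic (Finsupp.equivFunOnFinite.symm fun _ ↦ n.toNat)).subset fun d hd ↦ ?_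
  rw [mem_expsOfWeight] at hd
  rw [Set.mem_Iic, Finsupp.le_def]
  intro i
  fin_cases i <;> simp <;> omega

lemma Pm_eq_span (n : ℤ) : Pm n = Submodule.span ℝ ((monomial · 1) '' expsOfWeight n) := by
  rw [Pm, weightedHomogeneousSubmodule_eq_finsupp_supported,
    AddMonoidAlgebra.supported_eq_span_single]
  rfl

def PmEquivFinsupp (n : ℤ) : Pm n ≃ₗ[ℝ] (expsOfWeight n →₀ ℝ) :=
  (LinearEquiv.ofEq _ _ (weightedHomogeneousSubmodule_eq_finsupp_supported ℝ w3 n)).trans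
    (AddMonoidAlgebra.supportedEquivFinsupp _)

instance (n : ℤ) : FiniteDimensional ℝ (Pm n) :=
  have := (expsOfWeight_finite n).to_subtype
  .equiv (PmEquivFinsupp n).symm

lemma finrank_Pm (n : ℤ) : Module.finrank ℝ (Pm n) = (expsOfWeight n).ncard := by
  have := (expsOfWeight_finite n).fintype
  rw [(PmEquivFinsupp n).finrank_eq, Module.finrank_finsupp_self, Set.ncard_eq_toFinset_card',
    Set.toFinset_card]

lemma expsOfWeight_sdiff_tFree (n : ℤ) :
    expsOfWeight n \ {d | d 2 = 0} = (· + Finsupp.single 2 1) '' expsOfWeight (n - 2) := by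
  ext d
  simp only [Set.mem_sdiff, Set.mem_ofPred_eq, Set.mem_image, mem_expsOfWeight]
  constructor
  · rintro ⟨hd, hd2⟩
    refine ⟨d - Finsupp.single 2 1, ?_, tsub_add_cancel_of_le ?_⟩
    · simp; omega
    · exact Finsupp.single_le_iff.2 (Nat.one_le_iff_ne_zero.2 hd2)
  · rintro ⟨e, he, rfl⟩
    simp; omega

lemma expsOfWeight_inter_tFree (m : ℕ) :
    expsOfWeight m ∩ {d | d 2 = 0} =
      (fun k ↦ Finsupp.single 0 k + Finsupp.single 1 (m - k)) '' Set.Iic m := by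
  ext d
  simp only [Set.mem_inter_iff, Set.mem_ofPred_eq, Set.mem_image, Set.mem_Iic, mem_expsOfWeight]
  constructor
  · rintro ⟨hd, hd2⟩
    refine ⟨d 0, by omega, ?_⟩
    ext i; fin_cases i <;> simp <;> omega
  · rintro ⟨k, hk, rfl⟩
    simp; omega

lemma ncard_expsOfWeight (m : ℕ) :
    (expsOfWeight m).ncard = (expsOfWeight (m - 2)).ncard + (m + 1) := by
  rw [← Set.ncard_inter_add_ncard_sdiff_eq_ncard _ {d | d 2 = 0} (expsOfWeight_finite m),
    expsOfWeight_inter_tFree, expsOfWeight_sdiff_tFree,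
    Set.ncard_image_of_injective _ (add_left_injective _),
    Set.ncard_image_of_injective _ fun k l h ↦ by simpa using congr($h 0), Set.ncard_Iic_nat,
    add_comm]

open Finsupp in
def xyt (a b c : ℤ) : R3 := intMonomial (single 0 a + single 1 b + single 2 c)

lemma pderiv_x_xyt (a b c : ℤ) : pderiv 0 (xyt a b c) = (a : ℝ) • xyt (a - 1) b c := by
  rw [xyt, pderiv_intMonomial, xyt]
  congr 2
  · simp
  · ext i; fin_cases i <;> simp

lemma pderiv_y_xyt (a b c : ℤ) : pderiv 1 (xyt a b c) = (b : ℝ) • xyt a (b - 1) c := by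
  rw [xyt, pderiv_intMonomial, xyt]
  congr 2
  · simp
  · ext i; fin_cases i <;> simp

lemma pderiv_t_xyt (a b c : ℤ) : pderiv 2 (xyt a b c) = (c : ℝ) • xyt a b (c - 1) := by
  rw [xyt, pderiv_intMonomial, xyt]
  congr 2
  · simp
  · ext i; fin_cases i <;> simp

lemma x_mul_xyt {a : ℤ} (ha : 0 ≤ a) (b c : ℤ) : X 0 * xyt a b c = xyt (a + 1) b c := by
  rw [xyt, X_mul_intMonomial (by simpa using ha), xyt]
  congr 1
  ext i; fin_cases i <;> simp

lemma y_mul_xyt (a : ℤ) {b : ℤ} (hb : 0 ≤ b) (c : ℤ) : X 1 * xyt a b c = xyt a (b + 1) c := by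
  rw [xyt, X_mul_intMonomial (by simpa using hb), xyt]
  congr 1
  ext i; fin_cases i <;> simp

lemma Xop_xyt (a : ℤ) {b : ℤ} (hb : 0 ≤ b) (c : ℤ) :
    Xop (xyt a b c) = (a : ℝ) • xyt (a - 1) b c + (2 * c : ℝ) • xyt a (b + 1) (c - 1) := by
  rw [Xop_apply, pderiv_x_xyt, pderiv_t_xyt, mul_smul_comm, mul_assoc, y_mul_xyt _ hb, two_mul]
  module

lemma Yop_xyt {a : ℤ} (ha : 0 ≤ a) (b c : ℤ) :
    Yop (xyt a b c) = (b : ℝ) • xyt a (b - 1) c - (2 * c : ℝ) • xyt (a + 1) b (c - 1) := by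
  rw [Yop_apply, pderiv_y_xyt, pderiv_t_xyt, mul_smul_comm, mul_assoc, x_mul_xyt ha, two_mul]
  module

lemma ΔH_xyt {a b : ℤ} (ha : 0 ≤ a) (hb : 0 ≤ b) (c : ℤ) :
    ΔH (xyt a b c) =
      (a * (a - 1) : ℝ) • xyt (a - 2) b c + (b * (b - 1) : ℝ) • xyt a (b - 2) c
      + (4 * a * c : ℝ) • xyt (a - 1) (b + 1) (c - 1)
      - (4 * b * c : ℝ) • xyt (a + 1) (b - 1) (c - 1)
      + (4 * c * (c - 1) : ℝ) • (xyt (a + 2) b (c - 2) + xyt a (b + 2) (c - 2)) := by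
  rw [ΔH_apply, Xop_xyt _ hb, map_add, map_smul, map_smul, Xop_xyt _ hb, Xop_xyt _ (by omega),
    Yop_xyt ha, map_sub, map_smul, map_smul, Yop_xyt ha, Yop_xyt (by omega)]
  norm_num [sub_sub, add_assoc]
  module

lemma xyt_eq_monomial {a b c : ℤ} (ha : 0 ≤ a) (hb : 0 ≤ b) (hc : 0 ≤ c) :
    xyt a b c = monomial (Finsupp.single 0 a.toNat + Finsupp.single 1 b.toNat +
      Finsupp.single 2 c.toNat) 1 := by
  rw [xyt, intMonomial_of_nonneg (Finsupp.le_def.2 fun i ↦ by fin_cases i <;> simpa)]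
  congr 2
  ext i; fin_cases i <;> simp

lemma xyt_eq_zero {a b c : ℤ} (h : a < 0 ∨ b < 0 ∨ c < 0) : xyt a b c = 0 := by
  refine intMonomial_of_not_nonneg fun hv ↦ ?_
  have h0 := Finsupp.le_def.1 hv 0
  have h1 := Finsupp.le_def.1 hv 1
  have h2 := Finsupp.le_def.1 hv 2
  simp at h0 h1 h2
  omega

lemma monomial_eq_xyt (d : Fin 3 →₀ ℕ) : monomial d (1 : ℝ) = xyt (d 0) (d 1) (d 2) := by
  rw [xyt_eq_monomial (by simp) (by simp) (by simp)]
  congr 2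
  ext i; fin_cases i <;> simp

lemma xyt_mem_span_image {s : Set (Fin 3 →₀ ℕ)} {a b c : ℤ}
    (h : ∀ d : Fin 3 →₀ ℕ, (d 0 : ℤ) = a → (d 1 : ℤ) = b → (d 2 : ℤ) = c → d ∈ s) :
    xyt a b c ∈ Submodule.span ℝ ((monomial · (1 : ℝ)) '' s) := by
  by_cases hv : 0 ≤ a ∧ 0 ≤ b ∧ 0 ≤ c
  · rw [xyt_eq_monomial hv.1 hv.2.1 hv.2.2]
    exact Submodule.subset_span ⟨_, h _ (by simp; omega) (by simp; omega) (by simp; omega), rfl⟩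
  · rw [xyt_eq_zero (by omega)]
    exact Submodule.zero_mem _

lemma xyt_mem_Pm {a b c : ℤ} {n : ℤ} (h : a + b + 2 * c = n) : xyt a b c ∈ Pm n := by
  rw [Pm_eq_span]
  exact xyt_mem_span_image fun d h0 h1 h2 ↦ by rw [mem_expsOfWeight]; omega

lemma monomial_mem_map_ΔH_sup_span {n : ℤ} {d : Fin 3 →₀ ℕ} (hd : d ∈ expsOfWeight n) :
    monomial d 1 ∈ (Pm (n + 2)).map ΔH ⊔ Submodule.span ℝ ((monomial · (1 : ℝ)) ''
      {e | e ∈ expsOfWeight n ∧ e 1 + 2 * e 2 < d 1 + 2 * d 2}) := by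
  set L := Submodule.span ℝ ((monomial · (1 : ℝ)) ''
      {e | e ∈ expsOfWeight n ∧ e 1 + 2 * e 2 < d 1 + 2 * d 2})
  rw [mem_expsOfWeight] at hd
  obtain ⟨a, b, c, ha, hb, hc⟩ : ∃ a b c : ℤ, a = d 0 ∧ b = d 1 ∧ c = d 2 :=
    ⟨_, _, _, rfl, rfl, rfl⟩
  have hlead : ΔH (xyt (a + 2) b c) ∈ (Pm (n + 2)).map ΔH :=
    Submodule.mem_map_of_mem (xyt_mem_Pm (by omega))
  have hL a' b' c' (hw : a' + b' + 2 * c' = n) (hlt : b' + 2 * c' < b + 2 * c) (r : ℝ) :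
      r • xyt a' b' c' ∈ L :=
    L.smul_mem r <| xyt_mem_span_image fun e h0 h1 h2 ↦
      ⟨by rw [mem_expsOfWeight]; omega, by omega⟩
  have hlead : ΔH (xyt (a + 2) b c) ∈ (Pm (n + 2)).map ΔH :=
    Submodule.mem_map_of_mem (xyt_mem_Pm (by omega))
  have hexpand : ((a + 2) * (a + 1) : ℝ) • xyt a b c = ΔH (xyt (a + 2) b c) -
      ((b * (b - 1) : ℝ) • xyt (a + 2) (b - 2) c
        + (4 * (a + 2) * c : ℝ) • xyt (a + 1) (b + 1) (c - 1)
        - (4 * b * c : ℝ) • xyt (a + 3) (b - 1) (c - 1)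
        + (4 * c * (c - 1) : ℝ) • xyt (a + 4) b (c - 2)
        + (4 * c * (c - 1) : ℝ) • xyt (a + 2) (b + 2) (c - 2)) := by
    rw [ΔH_xyt (by omega) (by omega), show a + 2 - 2 = a by ring, show a + 2 - 1 = a + 1 by ring,
      show a + 2 + 1 = a + 3 by ring, show a + 2 + 2 = a + 4 by ring]
    push_cast
    module
  have hne : ((a + 2) * (a + 1) : ℝ) ≠ 0 := by
    have : (0 : ℝ) ≤ a := by exact_mod_cast (by omega : (0 : ℤ) ≤ a)
    positivity
  rw [monomial_eq_xyt, ← ha, ← hb, ← hc, ← Submodule.smul_mem_iff _ hne, hexpand]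
  refine sub_mem (Submodule.mem_sup_left hlead) (Submodule.mem_sup_right ?_)
  refine add_mem (add_mem (sub_mem (add_mem ?_ ?_) ?_) ?_) ?_ <;>
    exact hL _ _ _ (by omega) (by omega) _

lemma Pm_le_map_ΔH (n : ℤ) : Pm n ≤ (Pm (n + 2)).map ΔH := by
  rw [Pm_eq_span]
  exact Submodule.span_image_le_of_forall_mem_sup_span
    (measure fun d : Fin 3 →₀ ℕ ↦ d 1 + 2 * d 2).wf fun d hd ↦ monomial_mem_map_ΔH_sup_span hd

lemma map_ΔH_Pm (n : ℤ) : (Pm (n + 2)).map ΔH = Pm n := by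
  refine le_antisymm (Submodule.map_le_iff_le_comap.2 fun p hp ↦ ?_) (Pm_le_map_ΔH n)
  simpa using ΔH_mem_Pm hp

/-- `H_m` is finite-dimensional of dimension `m + 1`. -/
theorem stmt4 (m : ℕ) :
    FiniteDimensional ℝ (Hm (m : ℤ)) ∧ Module.finrank ℝ (Hm (m : ℤ)) = m + 1 := by
  have hmap : (Pm m).map ΔH = Pm (m - 2) := by simpa using map_ΔH_Pm (m - 2)
  have hrank := Submodule.finrank_inf_ker_add_finrank_map ΔH (Pm m)
  rw [hmap, finrank_Pm, finrank_Pm, ncard_expsOfWeight] at hrank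
  exact ⟨Submodule.finiteDimensional_of_le inf_le_left, by rw [Hm]; omega⟩

end
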